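/- Let r₁ = 3ℓ⁽¹⁾w⁽⁰⁾ − 2ℓ⁽⁰⁾w⁽¹⁾ ∈ P. Then r₁ does not lie in the ideal I generated by {f⁽ⁱ⁾ : i ≥ 0}, where f⁽ⁱ⁾ = Dⁱ((w⁽⁰⁾)² − (ℓ⁽⁰⁾)³). (In particular the image of r₁ in P/I is a nonzero nilpotent element.) -/
import Mathlib


open MvPolynomial

noncomputable section

/-- The polynomial ring `P = ℂ[ℓ⁽⁰⁾, ℓ⁽¹⁾, …, w⁽⁰⁾, w⁽¹⁾, …]`:
variables are indexed by `Fin 2 × ℕ`, where `(0, i)` is `ℓ⁽ⁱ⁾` and `(1, i)` is `w⁽ⁱ⁾`. -/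
abbrev P : Type := MvPolynomial (Fin 2 × ℕ) ℂ

/-- The unique ℂ-linear derivation `D : P → P` with `D(ℓ⁽ⁱ⁾) = ℓ⁽ⁱ⁺¹⁾`, `D(w⁽ⁱ⁾) = w⁽ⁱ⁺¹⁾`. -/
def D : Derivation ℂ P P :=
  MvPolynomial.mkDerivation ℂ (fun p : Fin 2 × ℕ => (X (p.1, p.2 + 1) : P))

/-- `ℓ⁽ⁱ⁾` -/
def lv (i : ℕ) : P := X (0, i)

/-- `w⁽ⁱ⁾` -/
def wv (i : ℕ) : P := X (1, i)

/-- `f = (w⁽⁰⁾)² − (ℓ⁽⁰⁾)³`. -/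
def f : P := wv 0 ^ 2 - lv 0 ^ 3

/-- `f⁽ⁱ⁾ = Dⁱ(f)`. -/
def fd (i : ℕ) : P := (⇑D)^[i] f

/-- The ideal `I` generated by all `f⁽ⁱ⁾`, `i ≥ 0`. -/
def I : Ideal P := Ideal.span (Set.range fd)

/-- `r₁ = 3ℓ⁽¹⁾w⁽⁰⁾ − 2ℓ⁽⁰⁾w⁽¹⁾`. -/
def r₁ : P := 3 * lv 1 * wv 0 - 2 * lv 0 * wv 1

/- ### Auxiliary constructions for the proof -/

/-- The auxiliary ring `Q' = ℂ[T, X's]`, with `T = X none`. -/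
abbrev Q' : Type := MvPolynomial (Option (Fin 2 × ℕ)) ℂ

/-- The weights: `ℓ⁽ⁱ⁾` has weight `i+2`, `w⁽ⁱ⁾` has weight `i+3`. -/
def wtv : Fin 2 × ℕ → ℕ := fun v => v.2 + 2 + v.1.val

/-- The grading variable `T`. -/
def Tq : Q' := X none

/-- The derivation on `Q'` with `Δ T = 0`, `Δ (X v) = T · X (shift v)`. -/
def Δ : Derivation ℂ Q' Q' :=
  MvPolynomial.mkDerivation ℂ
    (fun o => Option.elim o 0 (fun v => Tq * X (some (v.1, v.2 + 1))))

/-- The weighting algebra map `Φ : P → Q'`, `X v ↦ X v · T^(wtv v)`. -/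
def Φ : P →ₐ[ℂ] Q' := aeval (fun v => X (some v) * Tq ^ wtv v)

lemma Δ_T : Δ Tq = 0 := by
  simp [Δ, Tq, mkDerivation_X]

lemma Δ_some (v : Fin 2 × ℕ) :
    Δ (X (some v) : Q') = Tq * X (some (v.1, v.2 + 1)) := by
  simp [Δ, mkDerivation_X]

lemma wtv_succ (v : Fin 2 × ℕ) : wtv (v.1, v.2 + 1) = wtv v + 1 := by
  simp [wtv]; omega

lemma D_X (v : Fin 2 × ℕ) : D (X v) = X (v.1, v.2 + 1) := by
  simp [D, mkDerivation_X]

lemma Phi_comm_X (v : Fin 2 × ℕ) : Δ (Φ (X v)) = Φ (D (X v)) := by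
  rw [D_X]
  simp only [Φ, aeval_X]
  rw [Derivation.leibniz, Derivation.leibniz_pow, Δ_T, Δ_some, wtv_succ]
  simp only [smul_zero, smul_eq_mul, zero_add, pow_succ]
  ring

lemma Phi_comm (p : P) : Δ (Φ p) = Φ (D p) := by
  induction p using MvPolynomial.induction_on with
  | C a =>
      rw [derivation_C D a, map_zero, ← MvPolynomial.algebraMap_eq,
        AlgHom.commutes, Derivation.map_algebraMap]
  | add p q hp hq => simp [map_add, hp, hq]
  | mul_X p v hp =>
      rw [map_mul, Derivation.leibniz, Derivation.leibniz, map_add]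
      simp only [smul_eq_mul, map_mul]
      rw [hp, Phi_comm_X]

lemma T_dvd_Δ (q : Q') : Tq ∣ Δ q := by
  induction q using MvPolynomial.induction_on with
  | C a => rw [derivation_C]; exact dvd_zero _
  | add p q hp hq => rw [map_add]; exact dvd_add hp hq
  | mul_X p o hp =>
      rw [Derivation.leibniz]
      refine dvd_add (Dvd.dvd.mul_left ?_ _) (Dvd.dvd.mul_left hp _)
      cases o with
      | none =>
          show Tq ∣ Δ Tq
          rw [Δ_T]; exact dvd_zero _
      | some v => rw [Δ_some]; exact Dvd.intro _ rfl

lemma fd_succ (i : ℕ) : fd (i + 1) = D (fd i) := by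
  simp [fd, Function.iterate_succ_apply']

lemma T_pow_dvd_Φ_fd (i : ℕ) : Tq ^ (6 + i) ∣ Φ (fd i) := by
  induction i with
  | zero =>
      refine ⟨X (some (1, 0)) ^ 2 - X (some (0, 0)) ^ 3, ?_⟩
      have h1 : wtv (1, 0) = 3 := by simp [wtv]
      have h0 : wtv (0, 0) = 2 := by simp [wtv]
      simp only [fd, Function.iterate_zero, id, f, wv, lv, map_sub, map_pow, Φ, aeval_X,
        h1, h0]
      ring
  | succ i ih =>
      obtain ⟨g, hg⟩ := ih
      obtain ⟨h, hh⟩ := T_dvd_Δ g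
      refine ⟨h, ?_⟩
      rw [fd_succ, ← Phi_comm, hg, Derivation.leibniz, Derivation.leibniz_pow, Δ_T, hh]
      simp only [smul_zero, smul_eq_mul, mul_zero, add_zero]
      ring

/-- The evaluation `Q' → ℂ[X]`: `T ↦ X`, `ℓ⁽⁰⁾, w⁽⁰⁾, ℓ⁽¹⁾ ↦ 1`, others `↦ 0`. -/
def ev : Q' →ₐ[ℂ] Polynomial ℂ :=
  aeval (fun o => Option.elim o Polynomial.X
    (fun v => if v = (0, 0) ∨ v = (1, 0) ∨ v = (0, 1) then 1 else 0))

lemma ev_T : ev Tq = Polynomial.X := by simp [ev, Tq]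

lemma ev_Φ_f : ev (Φ f) = 0 := by
  have h1 : wtv (1, 0) = 3 := by simp [wtv]
  have h0 : wtv (0, 0) = 2 := by simp [wtv]
  simp only [f, wv, lv, map_sub, map_pow, Φ, aeval_X, h1, h0, map_mul, ev_T]
  rw [show (ev (X (some (1, 0)))) = 1 by simp [ev],
    show (ev (X (some (0, 0)))) = 1 by simp [ev]]
  ring

lemma ev_Φ_r₁ : ev (Φ r₁) = 3 * Polynomial.X ^ 6 := by
  have h10 : wtv (1, 0) = 3 := by simp [wtv]
  have h00 : wtv (0, 0) = 2 := by simp [wtv]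
  have h01 : wtv (0, 1) = 3 := by simp [wtv]
  have h11 : wtv (1, 1) = 4 := by simp [wtv]
  simp only [r₁, wv, lv, map_sub, map_mul, Φ, aeval_X, h10, h00, h01, h11, map_pow,
    map_ofNat, ev_T]
  rw [show (ev (X (some (1, 0)))) = 1 by simp [ev],
    show (ev (X (some (0, 0)))) = 1 by simp [ev],
    show (ev (X (some (0, 1)))) = 1 by simp [ev],
    show (ev (X (some (1, 1)))) = 0 by norm_num [ev, Prod.ext_iff]]
  ring

theorem r₁_not_mem : r₁ ∉ I := by
  intro h
  rw [I, Ideal.span, ← Set.image_univ] at h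
  have h' : r₁ ∈ Submodule.span P (Set.range fd) := by
    rwa [Set.image_univ] at h
  rw [Finsupp.mem_span_range_iff_exists_finsupp] at h'
  obtain ⟨c, hc⟩ := h'
  -- apply ev ∘ Φ
  have key : (3 : Polynomial ℂ) * Polynomial.X ^ 6
      = (c.sum fun i a => ev (Φ a) * ev (Φ (fd i))) := by
    rw [← ev_Φ_r₁, ← hc, Finsupp.sum, map_sum, map_sum, Finsupp.sum]
    refine Finset.sum_congr rfl (fun i _ => ?_)
    rw [smul_eq_mul, map_mul, map_mul]
  have dvd : (Polynomial.X : Polynomial ℂ) ^ 7 ∣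
      (c.sum fun i a => ev (Φ a) * ev (Φ (fd i))) := by
    refine Finset.dvd_sum (fun i _ => ?_)
    rcases i with _ | j
    · show (Polynomial.X : Polynomial ℂ) ^ 7 ∣ ev (Φ (c 0)) * ev (Φ (fd 0))
      have h0 : ev (Φ (fd 0)) = 0 := by
        rw [show fd 0 = f from rfl, ev_Φ_f]
      rw [h0, mul_zero]
      exact dvd_zero _
    · show (Polynomial.X : Polynomial ℂ) ^ 7 ∣
        ev (Φ (c (j + 1))) * ev (Φ (fd (j + 1)))
      obtain ⟨g, hg⟩ := T_pow_dvd_Φ_fd (j + 1)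
      refine Dvd.dvd.mul_left ?_ _
      rw [hg, map_mul, map_pow, ev_T]
      exact Dvd.dvd.mul_right (pow_dvd_pow _ (by omega)) _
  rw [← key] at dvd
  obtain ⟨g, hg⟩ := dvd
  have h6 := congrArg (fun p => Polynomial.coeff p 6) hg
  rw [mul_comm (Polynomial.X ^ 7) g] at h6
  simp [Polynomial.coeff_mul_X_pow'] at h6
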